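/- For all integers n ≥ 2 and r ≥ 0, letting P(n,r) denote the number of (1,2)-basis data of length n whose final height h_n equals r + 1, one has the recurrence P(n,r) = (r+1) · ( P(n−1, r−1) + 2·P(n−1, r) + P(n−1, r+1) ), with the convention P(n−1, −1) := 0. -/

import Mathlib

/-- A (1,2)-basis datum of length `n`: sequences `α β γ : {1,…,n} → ℕ` (encoded as
functions `ℕ → ℕ` vanishing outside `{1,…,n}`) with `β i, γ i ∈ {0,1}` and
`α i + 1 ≤ ∑_{j=1}^{i} (1 - β j - γ j)` (in `ℤ`) for all `i ∈ {1,…,n}`. -/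
def IsDatum (n : ℕ) (α β γ : ℕ → ℕ) : Prop :=
  (∀ i, i ∉ Finset.Icc 1 n → α i = 0 ∧ β i = 0 ∧ γ i = 0) ∧
  (∀ i ∈ Finset.Icc 1 n, β i ≤ 1 ∧ γ i ≤ 1) ∧
  (∀ i ∈ Finset.Icc 1 n,
    (α i : ℤ) + 1 ≤ ∑ j ∈ Finset.Icc 1 i, (1 - (β j : ℤ) - (γ j : ℤ)))

/-- The final height `h_n = ∑_{j=1}^{n} (1 - β_j - γ_j)`. -/
def finalHeight (n : ℕ) (β γ : ℕ → ℕ) : ℤ :=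
  ∑ j ∈ Finset.Icc 1 n, (1 - (β j : ℤ) - (γ j : ℤ))

/-- `P n r` is the number of (1,2)-basis data of length `n` with final height `r + 1`. -/
noncomputable def P (n r : ℕ) : ℕ :=
  {t : (ℕ → ℕ) × (ℕ → ℕ) × (ℕ → ℕ) | IsDatum n t.1 t.2.1 t.2.2 ∧
    finalHeight n t.2.1 t.2.2 = (r : ℤ) + 1}.ncard

/-! ### Auxiliary material -/

abbrev Triple := (ℕ → ℕ) × (ℕ → ℕ) × (ℕ → ℕ)

def S (n r : ℕ) : Set Triple :=
  {t : Triple | IsDatum n t.1 t.2.1 t.2.2 ∧ finalHeight n t.2.1 t.2.2 = (r : ℤ) + 1}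

lemma P_eq_S (n r : ℕ) : P n r = (S n r).ncard := rfl

lemma S_finite (n r : ℕ) : (S n r).Finite := by
  classical
  set f : Triple → ((Finset.Icc 1 n : Finset ℕ) → ℕ × ℕ × ℕ) :=
    fun t i => (t.1 i, t.2.1 i, t.2.2 i) with hf
  apply Set.Finite.of_finite_image (f := f)
  · apply Set.Finite.subset
      (Set.Finite.pi (fun _ : (Finset.Icc 1 n : Finset ℕ) =>
        (Set.finite_Iic n).prod ((Set.finite_Iic 1).prod (Set.finite_Iic 1))))
    rintro _ ⟨⟨α, β, γ⟩, ht, rfl⟩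
    obtain ⟨⟨h1, h2, h3⟩, _⟩ := ht
    intro i _
    have hi := i.2
    have hmem := Finset.mem_Icc.mp hi
    have hb := h2 i hi
    have hsum := h3 i hi
    have hub : (∑ j ∈ Finset.Icc 1 (i : ℕ), (1 - (β j : ℤ) - (γ j : ℤ))) ≤ (i : ℕ) := by
      calc (∑ j ∈ Finset.Icc 1 (i : ℕ), (1 - (β j : ℤ) - (γ j : ℤ)))
          ≤ ∑ _j ∈ Finset.Icc 1 (i : ℕ), (1 : ℤ) := by
            apply Finset.sum_le_sum
            intro j _
            have : (0 : ℤ) ≤ (β j : ℤ) := Int.natCast_nonneg _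
            have : (0 : ℤ) ≤ (γ j : ℤ) := Int.natCast_nonneg _
            omega
        _ = (i : ℕ) := by simp [Nat.card_Icc]
    refine ⟨?_, hb.1, hb.2⟩
    have : (α i : ℤ) + 1 ≤ (i : ℕ) := le_trans hsum hub
    simp only [Set.mem_Iic, hf]
    omega
  · intro t ht t' ht' h
    obtain ⟨⟨t1, _, _⟩, _⟩ := ht
    obtain ⟨⟨t1', _, _⟩, _⟩ := ht'
    have key : ∀ (g : ℕ × ℕ × ℕ → ℕ) (p : Triple → ℕ → ℕ),
        (∀ (s : Triple) (i : ℕ) (hi : i ∈ Finset.Icc 1 n), p s i = g (f s ⟨i, hi⟩)) →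
        (∀ i, i ∉ Finset.Icc 1 n → p t i = 0) → (∀ i, i ∉ Finset.Icc 1 n → p t' i = 0) →
        p t = p t' := by
      intro g p hg hz hz'
      funext i
      by_cases hi : i ∈ Finset.Icc 1 n
      · rw [hg t i hi, hg t' i hi, congrFun h ⟨i, hi⟩]
      · rw [hz i hi, hz' i hi]
    have e1 : t.1 = t'.1 :=
      key (fun x => x.1) (fun t => t.1) (fun _ _ _ => rfl)
        (fun i hi => (t1 i hi).1) (fun i hi => (t1' i hi).1)
    have e2 : t.2.1 = t'.2.1 :=
      key (fun x => x.2.1) (fun t => t.2.1) (fun _ _ _ => rfl)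
        (fun i hi => (t1 i hi).2.1) (fun i hi => (t1' i hi).2.1)
    have e3 : t.2.2 = t'.2.2 :=
      key (fun x => x.2.2) (fun t => t.2.2) (fun _ _ _ => rfl)
        (fun i hi => (t1 i hi).2.2) (fun i hi => (t1' i hi).2.2)
    exact Prod.ext e1 (Prod.ext e2 e3)

/-- Extension of a triple by one step at position `n` with data `(a, b, c)`. -/
def ext (n b c a : ℕ) (t : Triple) : Triple :=
  (Function.update t.1 n a, Function.update t.2.1 n b, Function.update t.2.2 n c)

/-- The slice of `S (m+1) r` where the last step has `β = b`, `γ = c`. -/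
def Sl (m r b c : ℕ) : Set Triple :=
  {t : Triple | t ∈ S (m + 1) r ∧ t.2.1 (m + 1) = b ∧ t.2.2 (m + 1) = c}

lemma sum_update_eq (β : ℕ → ℕ) (b i m : ℕ) (h : i ≤ m) (g : ℕ → ℤ → ℤ) :
    ∑ j ∈ Finset.Icc 1 i, g j ((Function.update β (m + 1) b j : ℕ) : ℤ)
      = ∑ j ∈ Finset.Icc 1 i, g j ((β j : ℕ) : ℤ) := by
  apply Finset.sum_congr rfl
  intro j hj
  have hj' := Finset.mem_Icc.mp hj
  rw [Function.update_of_ne (by omega)]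

lemma slice_eq (m r b c r' : ℕ) (hb : b ≤ 1) (hc : c ≤ 1) (hr' : r' + 1 = r + b + c) :
    Sl m r b c = (fun p : ℕ × Triple => ext (m + 1) b c p.1 p.2) ''
      (Set.Iio (r + 1) ×ˢ S m r') := by
  have hr'' : (r' : ℤ) + 1 = (r : ℤ) + b + c := by exact_mod_cast hr'
  ext ⟨α, β, γ⟩
  constructor
  · rintro ⟨⟨⟨h1, h2, h3⟩, hfh⟩, hβ, hγ⟩
    dsimp only at h1 h2 h3 hfh hβ hγ
    have hmem : m + 1 ∈ Finset.Icc 1 (m + 1) := Finset.mem_Icc.mpr ⟨by omega, le_refl _⟩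
    have ha : α (m + 1) < r + 1 := by
      have h3n := h3 (m + 1) hmem
      rw [show (∑ j ∈ Finset.Icc 1 (m + 1), (1 - (β j : ℤ) - (γ j : ℤ)))
        = finalHeight (m + 1) β γ from rfl, hfh] at h3n
      omega
    have hfm : finalHeight m β γ = (r' : ℤ) + 1 := by
      have hsplit : finalHeight (m + 1) β γ
          = finalHeight m β γ + (1 - (β (m + 1) : ℤ) - (γ (m + 1) : ℤ)) :=
        Finset.sum_Icc_succ_top (by omega) _
      rw [hfh, hβ, hγ] at hsplit
      linarith
    refine ⟨(α (m + 1), (Function.update α (m + 1) 0, Function.update β (m + 1) 0,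
      Function.update γ (m + 1) 0)), ⟨ha, ?_, ?_⟩, ?_⟩
    · refine ⟨?_, ?_, ?_⟩ <;> dsimp only
      · intro i hi
        by_cases h : i = m + 1
        · subst h; simp
        · have hi' : i ∉ Finset.Icc 1 (m + 1) := by
            simp only [Finset.mem_Icc] at hi ⊢; omega
          simp only [Function.update_of_ne h]
          exact h1 i hi'
      · intro i hi
        have hi' := Finset.mem_Icc.mp hi
        have hne : i ≠ m + 1 := by omega
        simp only [Function.update_of_ne hne]
        exact h2 i (Finset.mem_Icc.mpr ⟨hi'.1, by omega⟩)
      · intro i hi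
        have hi' := Finset.mem_Icc.mp hi
        have hne : i ≠ m + 1 := by omega
        rw [Function.update_of_ne hne]
        have hs : ∑ j ∈ Finset.Icc 1 i,
            (1 - (Function.update β (m + 1) 0 j : ℤ) - (Function.update γ (m + 1) 0 j : ℤ))
            = ∑ j ∈ Finset.Icc 1 i, (1 - (β j : ℤ) - (γ j : ℤ)) := by
          apply Finset.sum_congr rfl
          intro j hj
          have hj' := Finset.mem_Icc.mp hj
          rw [Function.update_of_ne (show j ≠ m + 1 by omega),
            Function.update_of_ne (show j ≠ m + 1 by omega)]
        rw [hs]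
        exact h3 i (Finset.mem_Icc.mpr ⟨hi'.1, by omega⟩)
    · show finalHeight m _ _ = _
      have hs : finalHeight m (Function.update β (m + 1) 0) (Function.update γ (m + 1) 0)
          = finalHeight m β γ := by
        apply Finset.sum_congr rfl
        intro j hj
        have hj' := Finset.mem_Icc.mp hj
        rw [Function.update_of_ne (show j ≠ m + 1 by omega),
          Function.update_of_ne (show j ≠ m + 1 by omega)]
      rw [hs, hfm]
    · show ext (m + 1) b c (α (m + 1)) _ = _
      simp only [ext, Function.update_idem]
      rw [← hβ, ← hγ, Function.update_eq_self, Function.update_eq_self,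
        Function.update_eq_self]
  · rintro ⟨⟨a, α', β', γ'⟩, ⟨ha, ⟨h1, h2, h3⟩, hfh⟩, heq⟩
    simp only [ext, Prod.mk.injEq] at heq
    obtain ⟨e1, e2, e3⟩ := heq
    subst e1; subst e2; subst e3
    simp only [Set.mem_Iio] at ha
    dsimp only at h1 h2 h3 hfh
    have hs1 : ∀ i, i ≤ m → ∑ j ∈ Finset.Icc 1 i,
        (1 - (Function.update β' (m + 1) b j : ℤ) - (Function.update γ' (m + 1) c j : ℤ))
        = ∑ j ∈ Finset.Icc 1 i, (1 - (β' j : ℤ) - (γ' j : ℤ)) := by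
      intro i him
      apply Finset.sum_congr rfl
      intro j hj
      have hj' := Finset.mem_Icc.mp hj
      rw [Function.update_of_ne (show j ≠ m + 1 by omega),
        Function.update_of_ne (show j ≠ m + 1 by omega)]
    have htop : ∑ j ∈ Finset.Icc 1 (m + 1),
        (1 - (Function.update β' (m + 1) b j : ℤ) - (Function.update γ' (m + 1) c j : ℤ))
        = (r : ℤ) + 1 := by
      rw [Finset.sum_Icc_succ_top (by omega : 1 ≤ m + 1), hs1 m le_rfl,
        Function.update_self, Function.update_self]
      have : (∑ j ∈ Finset.Icc 1 m, (1 - (β' j : ℤ) - (γ' j : ℤ)))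
          = (r' : ℤ) + 1 := hfh
      rw [this]; linarith
    refine ⟨⟨⟨?_, ?_, ?_⟩, htop⟩, Function.update_self _ _ _, Function.update_self _ _ _⟩
      <;> dsimp only
    · intro i hi
      have hne : i ≠ m + 1 := by
        rintro rfl; exact hi (Finset.mem_Icc.mpr ⟨by omega, le_rfl⟩)
      have hni : i ∉ Finset.Icc 1 m := by
        intro h
        have h' := Finset.mem_Icc.mp h
        exact hi (Finset.mem_Icc.mpr ⟨h'.1, by omega⟩)
      simp only [Function.update_of_ne hne]
      exact h1 i hni
    · intro i hi
      by_cases h : i = m + 1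
      · subst h
        simp only [Function.update_self]
        exact ⟨hb, hc⟩
      · have hi' := Finset.mem_Icc.mp hi
        simp only [Function.update_of_ne h]
        exact h2 i (Finset.mem_Icc.mpr ⟨hi'.1, by omega⟩)
    · intro i hi
      by_cases h : i = m + 1
      · subst h
        rw [Function.update_self, htop]
        omega
      · have hi' := Finset.mem_Icc.mp hi
        have him : i ≤ m := by omega
        rw [Function.update_of_ne h, hs1 i him]
        exact h3 i (Finset.mem_Icc.mpr ⟨hi'.1, him⟩)

lemma slice_empty (m : ℕ) (hm : 1 ≤ m) : Sl m 0 0 0 = ∅ := by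
  ext t
  simp only [Sl, Set.mem_setOf_eq, Set.mem_empty_iff_false, iff_false, not_and]
  rintro ⟨⟨h1, h2, h3⟩, hfh⟩ hβ hγ
  have hc := h3 m (Finset.mem_Icc.mpr ⟨hm, by omega⟩)
  have hsplit : finalHeight (m + 1) t.2.1 t.2.2
      = (∑ j ∈ Finset.Icc 1 m, (1 - (t.2.1 j : ℤ) - (t.2.2 j : ℤ)))
        + (1 - (t.2.1 (m + 1) : ℤ) - (t.2.2 (m + 1) : ℤ)) :=
    Finset.sum_Icc_succ_top (by omega) _
  rw [hfh, hβ, hγ] at hsplit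
  have hz : (0 : ℤ) ≤ (t.1 m : ℤ) := Int.natCast_nonneg _
  push_cast at hsplit
  linarith

lemma ncard_prod' {A B : Type*} {s : Set A} {t : Set B} (hs : s.Finite) (ht : t.Finite) :
    (s ×ˢ t).ncard = s.ncard * t.ncard := by
  rw [Set.ncard_eq_toFinset_card _ (hs.prod ht), ← Set.Finite.toFinset_prod,
    Finset.card_product, Set.ncard_eq_toFinset_card _ hs, Set.ncard_eq_toFinset_card _ ht]

lemma ncard_Iio_nat (k : ℕ) : (Set.Iio k : Set ℕ).ncard = k := by
  rw [← Finset.coe_Iio, Set.ncard_coe_finset]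
  simp

lemma ncard_slice (m r b c r' : ℕ) (hb : b ≤ 1) (hc : c ≤ 1) (hr' : r' + 1 = r + b + c) :
    (Sl m r b c).ncard = (r + 1) * P m r' := by
  rw [slice_eq m r b c r' hb hc hr', Set.ncard_image_of_injOn, ncard_prod' (Set.finite_Iio _)
    (S_finite m r'), ncard_Iio_nat, P_eq_S]
  rintro ⟨a, α, β, γ⟩ ⟨_, ⟨h1, _, _⟩, _⟩ ⟨a', α', β', γ'⟩ ⟨_, ⟨h1', _, _⟩, _⟩ heq
  simp only [ext, Prod.mk.injEq] at heq
  obtain ⟨e1, e2, e3⟩ := heq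
  dsimp only at h1 h1' e1 e2 e3
  have hnm : m + 1 ∉ Finset.Icc 1 m := by simp [Finset.mem_Icc]
  have hz := h1 (m + 1) hnm
  have hz' := h1' (m + 1) hnm
  have ha : a = a' := by
    have := congrFun e1 (m + 1)
    simpa using this
  have key : ∀ (f g : ℕ → ℕ) (v : ℕ), f (m + 1) = 0 → g (m + 1) = 0 →
      Function.update f (m + 1) v = Function.update g (m + 1) v → f = g := by
    intro f g v hf hg h
    funext i
    by_cases hi : i = m + 1
    · subst hi; rw [hf, hg]
    · have := congrFun h i
      rwa [Function.update_of_ne hi, Function.update_of_ne hi] at this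
  have e1' : α = α' := by
    rw [ha] at e1
    exact key _ _ _ hz.1 hz'.1 e1
  have e2' : β = β' := key _ _ _ hz.2.1 hz'.2.1 e2
  have e3' : γ = γ' := key _ _ _ hz.2.2 hz'.2.2 e3
  rw [ha, e1', e2', e3']

lemma Sl_finite (m r b c : ℕ) : (Sl m r b c).Finite :=
  (S_finite (m + 1) r).subset fun _ ht => ht.1

lemma Sl_disj (m r b c b' c' : ℕ) (h : (b, c) ≠ (b', c')) :
    Disjoint (Sl m r b c) (Sl m r b' c') := by
  rw [Set.disjoint_left]
  rintro t ⟨_, hβ, hγ⟩ ⟨_, hβ', hγ'⟩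
  exact h (by rw [← hβ, ← hγ, hβ', hγ'])

lemma S_decomp (m r : ℕ) :
    S (m + 1) r = Sl m r 0 0 ∪ Sl m r 1 0 ∪ Sl m r 0 1 ∪ Sl m r 1 1 := by
  ext t
  simp only [Sl, Set.mem_union, Set.mem_setOf_eq]
  constructor
  · intro ht
    have h2 := ht.1.2.1 (m + 1) (Finset.mem_Icc.mpr ⟨by omega, le_rfl⟩)
    have hβ := h2.1
    have hγ := h2.2
    interval_cases h : t.2.1 (m + 1) <;> interval_cases h' : t.2.2 (m + 1) <;> tauto
  · tauto

/-- The recurrence `P(n,r) = (r+1)(P(n-1,r-1) + 2 P(n-1,r) + P(n-1,r+1))`,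
with the convention `P(n-1,-1) = 0`. -/
theorem P_recurrence (n : ℕ) (hn : 2 ≤ n) (r : ℕ) :
    P n r = (r + 1) *
      ((if r = 0 then 0 else P (n - 1) (r - 1)) + 2 * P (n - 1) r + P (n - 1) (r + 1)) := by
  obtain ⟨m, rfl⟩ : ∃ m, n = m + 1 := ⟨n - 1, by omega⟩
  have hm : 1 ≤ m := by omega
  simp only [Nat.add_sub_cancel]
  rw [P_eq_S, S_decomp m r,
    Set.ncard_union_eq (by
      refine Set.disjoint_union_left.mpr ⟨Set.disjoint_union_left.mpr ⟨?_, ?_⟩, ?_⟩ <;>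
        exact Sl_disj _ _ _ _ _ _ (by decide))
      (((Sl_finite m r 0 0).union (Sl_finite m r 1 0)).union (Sl_finite m r 0 1))
      (Sl_finite m r 1 1),
    Set.ncard_union_eq (by
      refine Set.disjoint_union_left.mpr ⟨?_, ?_⟩ <;>
        exact Sl_disj _ _ _ _ _ _ (by decide))
      ((Sl_finite m r 0 0).union (Sl_finite m r 1 0)) (Sl_finite m r 0 1),
    Set.ncard_union_eq (Sl_disj _ _ _ _ _ _ (by decide))
      (Sl_finite m r 0 0) (Sl_finite m r 1 0)]
  have h10 := ncard_slice m r 1 0 r (by omega) (by omega) (by omega)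
  have h01 := ncard_slice m r 0 1 r (by omega) (by omega) (by omega)
  have h11 := ncard_slice m r 1 1 (r + 1) (by omega) (by omega) (by omega)
  by_cases hr : r = 0
  · subst hr
    rw [slice_empty m hm, h10, h01, h11]
    simp
    ring
  · have h00 := ncard_slice m r 0 0 (r - 1) (by omega) (by omega) (by omega)
    rw [h00, h10, h01, h11, if_neg hr]
    ring
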